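/- Let α ≠ 0 and m be real numbers. For smooth functions Ψ : ℝ² → ℝ of variables (x,t), define the operators: (K̂Ψ)(x,t) = −t·(Ψ(x,t) − Ψ(x−α,t))/α − m·x·Ψ(x−α/2,t); (ĤΨ)(x,t) = ∂Ψ/∂t(x,t); (P̂Ψ)(x,t) = ∂Ψ/∂x(x,t); (M̂Ψ)(x,t) = m·Ψ(x−α/2,t). Then for every smooth Ψ: ([K̂,Ĥ]Ψ)(x,t) = (Ψ(x,t) − Ψ(x−α,t))/α; [K̂,P̂]Ψ = M̂Ψ; [Ĥ,P̂]Ψ = 0; ([M̂,K̂]Ψ)(x,t) = (α/2)·m²·Ψ(x−α,t) = (α/2)(M̂²Ψ)(x,t); and [M̂,Ĥ]Ψ = [M̂,P̂]Ψ = 0. Thus these difference-differential operators realize the deformed commutation relations of the quantum extended Galilei algebra U_{α}(𝔤), namely [K,H] = (1 − e^{−αP})/α, [K,P] = M, [H,P] = 0, [M,K] = (α/2)M², [M,H] = [M,P] = 0. -/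

import Mathlib

noncomputable section

/-- The deformed boost operator
`(K̂Ψ)(x,t) = −t·(Ψ(x,t) − Ψ(x−α,t))/α − m·x·Ψ(x−α/2,t)`. -/
def Khat (α m : ℝ) (Ψ : ℝ × ℝ → ℝ) : ℝ × ℝ → ℝ := fun z =>
  -z.2 * (Ψ z - Ψ (z.1 - α, z.2)) / α - m * z.1 * Ψ (z.1 - α / 2, z.2)

/-- The time-translation operator `ĤΨ = ∂Ψ/∂t`. -/
def Hhat (Ψ : ℝ × ℝ → ℝ) : ℝ × ℝ → ℝ := fun z => fderiv ℝ Ψ z (0, 1)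

/-- The space-translation operator `P̂Ψ = ∂Ψ/∂x`. -/
def Phat (Ψ : ℝ × ℝ → ℝ) : ℝ × ℝ → ℝ := fun z => fderiv ℝ Ψ z (1, 0)

/-- The deformed mass operator `(M̂Ψ)(x,t) = m·Ψ(x−α/2,t)`. -/
def Mhat (α m : ℝ) (Ψ : ℝ × ℝ → ℝ) : ℝ × ℝ → ℝ := fun z => m * Ψ (z.1 - α / 2, z.2)

lemma shift_hasFDerivAt {Ψ : ℝ × ℝ → ℝ} (hΨ : Differentiable ℝ Ψ) (a : ℝ) (z : ℝ × ℝ) :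
    HasFDerivAt (fun w : ℝ × ℝ => Ψ (w.1 - a, w.2)) (fderiv ℝ Ψ (z.1 - a, z.2)) z := by
  have hp : ∀ w : ℝ × ℝ, w - ((a, 0) : ℝ × ℝ) = (w.1 - a, w.2) := by
    intro w; ext <;> simp
  have h := ((hΨ (z - ((a, 0) : ℝ × ℝ))).hasFDerivAt).comp z
    ((hasFDerivAt_id z).sub_const ((a, 0) : ℝ × ℝ))
  simp only [Function.comp_def, hp, ContinuousLinearMap.comp_id] at h
  exact h

lemma fderiv_Khat_apply (α m : ℝ) {Ψ : ℝ × ℝ → ℝ} (hΨ : Differentiable ℝ Ψ) (z v : ℝ × ℝ) :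
    fderiv ℝ (Khat α m Ψ) z v =
      (-v.2 * (Ψ z - Ψ (z.1 - α, z.2))
        + -z.2 * (fderiv ℝ Ψ z v - fderiv ℝ Ψ (z.1 - α, z.2) v)) / α
      - (m * v.1 * Ψ (z.1 - α / 2, z.2) + m * z.1 * fderiv ℝ Ψ (z.1 - α / 2, z.2) v) := by
  have h1 : HasFDerivAt (fun w : ℝ × ℝ => -w.2)
      (-(ContinuousLinearMap.snd ℝ ℝ ℝ)) z := hasFDerivAt_snd.neg
  have hsub : HasFDerivAt (fun w : ℝ × ℝ => Ψ w - Ψ (w.1 - α, w.2))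
      (fderiv ℝ Ψ z - fderiv ℝ Ψ (z.1 - α, z.2)) z :=
    (hΨ z).hasFDerivAt.sub (shift_hasFDerivAt hΨ α z)
  have h2 : HasFDerivAt (fun w : ℝ × ℝ => m * w.1)
      (m • (ContinuousLinearMap.fst ℝ ℝ ℝ)) z := hasFDerivAt_fst.const_mul m
  have htot := ((h1.mul hsub).mul_const α⁻¹).sub (h2.mul (shift_hasFDerivAt hΨ (α/2) z))
  have := htot.fderiv
  rw [show Khat α m Ψ = (fun w : ℝ × ℝ => -w.2 * (Ψ w - Ψ (w.1 - α, w.2)) * α⁻¹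
      - m * w.1 * Ψ (w.1 - α / 2, w.2)) from funext fun w => by rw [Khat, div_eq_mul_inv]]
  simp only [Pi.mul_def, Pi.sub_def] at this
  rw [this]
  simp [smul_eq_mul]
  ring

/-- The differential-difference operators `K̂, Ĥ, P̂, M̂` realize the deformed
commutation relations of the quantum extended Galilei algebra `U_α(𝔤)`:
`[K,H] = (1 − e^{−αP})/α`, `[K,P] = M`, `[H,P] = 0`, `[M,K] = (α/2)M²`,
`[M,H] = [M,P] = 0`. -/
theorem quantum_galilei_difference_realization
    (α m : ℝ) (hα : α ≠ 0) (Ψ : ℝ × ℝ → ℝ) (hΨ : ContDiff ℝ (⊤ : ℕ∞) Ψ) :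
    ∀ z : ℝ × ℝ,
      Khat α m (Hhat Ψ) z - Hhat (Khat α m Ψ) z =
        (Ψ z - Ψ (z.1 - α, z.2)) / α ∧
      Khat α m (Phat Ψ) z - Phat (Khat α m Ψ) z = Mhat α m Ψ z ∧
      Hhat (Phat Ψ) z - Phat (Hhat Ψ) z = 0 ∧
      Mhat α m (Khat α m Ψ) z - Khat α m (Mhat α m Ψ) z =
        (α / 2) * m ^ 2 * Ψ (z.1 - α, z.2) ∧
      Mhat α m (Khat α m Ψ) z - Khat α m (Mhat α m Ψ) z =
        (α / 2) * Mhat α m (Mhat α m Ψ) z ∧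
      Mhat α m (Hhat Ψ) z - Hhat (Mhat α m Ψ) z = 0 ∧
      Mhat α m (Phat Ψ) z - Phat (Mhat α m Ψ) z = 0 := by
  intro z
  have hD : Differentiable ℝ Ψ := hΨ.differentiable (by simp)
  have hd : Differentiable ℝ (fderiv ℝ Ψ) :=
    (hΨ.fderiv_right (m := 1) (by exact WithTop.coe_le_coe.mpr le_top)).differentiable (by simp)
  have e1 : z.1 - α / 2 - α / 2 = z.1 - α := by ring
  have e2 : z.1 - α / 2 - α = z.1 - α - α / 2 := by ring
  have hMH : ∀ v : ℝ × ℝ, fderiv ℝ (Mhat α m Ψ) z v = m * fderiv ℝ Ψ (z.1 - α / 2, z.2) v := by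
    intro v
    rw [show Mhat α m Ψ = fun w : ℝ × ℝ => m * Ψ (w.1 - α / 2, w.2) from rfl,
      ((shift_hasFDerivAt hD (α/2) z).const_mul m).fderiv]
    simp
  refine ⟨?_, ?_, ?_, ?_, ?_, ?_, ?_⟩
  · rw [Hhat, fderiv_Khat_apply α m hD z (0, 1)]
    simp only [Khat, Hhat]
    ring
  · rw [Phat, fderiv_Khat_apply α m hD z (1, 0)]
    simp only [Khat, Phat, Mhat]
    ring
  · rw [Hhat, Phat]
    have eP := fderiv_clm_apply (hd z) (differentiableAt_const ((1, 0) : ℝ × ℝ))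
    have eH := fderiv_clm_apply (hd z) (differentiableAt_const ((0, 1) : ℝ × ℝ))
    rw [show Phat Ψ = fun w => fderiv ℝ Ψ w (1, 0) from rfl, eP,
      show Hhat Ψ = fun w => fderiv ℝ Ψ w (0, 1) from rfl, eH]
    simp only [fderiv_const_apply, Pi.zero_apply, ContinuousLinearMap.comp_zero, zero_add,
      ContinuousLinearMap.add_apply, ContinuousLinearMap.zero_apply,
      ContinuousLinearMap.flip_apply]
    rw [second_derivative_symmetric (fun y => (hD y).hasFDerivAt) ((hd z).hasFDerivAt)
      ((0, 1) : ℝ × ℝ) ((1, 0) : ℝ × ℝ)]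
    ring
  · simp only [Mhat, Khat, e1, e2]
    ring
  · simp only [Mhat, Khat, e1, e2]
    ring
  · rw [Hhat, hMH (0, 1)]
    simp only [Mhat, Hhat]
    ring
  · rw [Phat, hMH (1, 0)]
    simp only [Mhat, Phat]
    ring
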